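/- Exhaustion lemma for saturated pairs (abstract form): Let P be a partial order and let Sat ⊆ (P × P) × (l × l) be a relation ('the pair (p,q) is (i,j)-saturated') that is hereditary: if p' ≤ p, q' ≤ q and (p,q) is (i,j)-saturated then (p',q') is (i,j)-saturated. Suppose further that for any finite descending sequence construction as in the paper, failure of saturation below every pair of extensions for each of the l² color pairs leads to a contradiction via a pigeonhole on colors (Lemma: for every p,q ≤ p₀ and every M ∈ S_p, K ∈ T_q some color pair (i,j) makes M i-large in q and K j-large in p). Then there exist (i,j) ∈ l × l and p₁ ≤ p₀ such that for every p₂ ≤ p₁ there exist p, q ≤ p₂ with (p,q) (i,j)-saturated. -/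

import Mathlib

/-- `smallSubsets A` is `[A]^{<ℵ₁}`, the collection of countable subsets of `A`. -/
def smallSubsets {γ : Type*} (A : Set γ) : Set (Set γ) :=
  {M | M ⊆ A ∧ M.Countable}

/-- `C` is a club in `[A]^{<ℵ₁}`: a family of countable subsets of `A` that is
cofinal and closed under unions of countable increasing chains. -/
def IsClubIn {γ : Type*} (A : Set γ) (C : Set (Set γ)) : Prop :=
  C ⊆ smallSubsets A ∧
  (∀ N ∈ smallSubsets A, ∃ M ∈ C, N ⊆ M) ∧
  (∀ D : Set (Set γ), D ⊆ C → D.Nonempty → D.Countable → IsChain (· ⊆ ·) D →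
    ⋃₀ D ∈ C)

/-- `S` is stationary in `[A]^{<ℵ₁}`: a family of countable subsets of `A`
meeting every club in `[A]^{<ℵ₁}`. -/
def IsStationaryIn {γ : Type*} (A : Set γ) (S : Set (Set γ)) : Prop :=
  S ⊆ smallSubsets A ∧ ∀ C : Set (Set γ), IsClubIn A C → (S ∩ C).Nonempty

/-- A (candidate) condition in the countable stationary tower: a pair `⟨A, S⟩`
with `A` a set and `S` a family of countable subsets of `A`. -/
structure Cond (γ : Type*) where
  A : Set γ
  S : Set (Set γ)

/-- `⟨A, S⟩` is a genuine condition: `A` is nonempty and `S` is stationary in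
`[A]^{<ℵ₁}`. -/
def Cond.IsCond {γ : Type*} (p : Cond γ) : Prop :=
  p.A.Nonempty ∧ IsStationaryIn p.A p.S

/-- The tower ordering: `q ≤ p` iff `q.A ⊇ p.A` and `q.S ⊆ (p.S)↑q.A`. -/
def Cond.le {γ : Type*} (q p : Cond γ) : Prop :=
  p.A ⊆ q.A ∧ q.S ⊆ {M | M ⊆ q.A ∧ M.Countable ∧ M ∩ p.A ∈ p.S}

/-- `𝒦 c i M q` is the set of `K ∈ q.S` with `F M ≠ F K` and
`c (F M) (F K) = i`. -/
def largeSet {γ : Type*} {l : ℕ} (F : Set γ → γ) (c : γ → γ → Fin l)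
    (i : Fin l) (M : Set γ) (q : Cond γ) : Set (Set γ) :=
  {K ∈ q.S | F M ≠ F K ∧ c (F M) (F K) = i}

/-- `M` is `i`-large in the condition `q` w.r.t. the coloring `c`. -/
def ILarge {γ : Type*} {l : ℕ} (F : Set γ → γ) (c : γ → γ → Fin l)
    (M : Set γ) (q : Cond γ) (i : Fin l) : Prop :=
  IsStationaryIn q.A (largeSet F c i M q)

/-- The pair `(p, q)` is `(i,j)`-saturated w.r.t. `c`: below every pair of
extensions, stationarily many `M` are `i`-large in the second coordinate and
stationarily many `K` are `j`-large in the first. -/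
def Saturated {γ : Type*} {l : ℕ} (F : Set γ → γ) (c : γ → γ → Fin l)
    (p q : Cond γ) (i j : Fin l) : Prop :=
  ∀ p' : Cond γ, p'.IsCond → p'.le p → ∀ q' : Cond γ, q'.IsCond → q'.le q →
    IsStationaryIn p'.A {M ∈ p'.S | ILarge F c M q' i} ∧
    IsStationaryIn q'.A {K ∈ q'.S | ILarge F c K p' j}


/-!
Suppose no pair of colors works. As there are finitely many pairs `(i, j)`, successive
extensions give `r ≤ p₀` below which no two conditions form an `(i, j)`-saturated pair, for any
`(i, j)`. Having first lifted `p₀` to the ambient set `univ`, every condition below `r` has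
ambient set `univ`, and the tower order there is plain inclusion of the stationary families.
Going through the pairs once more, each failure of saturation lets us remove a nonstationary set
from one side, which produces `p, q ≤ r` such that for every `(i, j)` either no `M ∈ p.S` is
`i`-large in `q` or no `K ∈ q.S` is `j`-large in `p`; inclusion makes both properties persist
under further extension. Any `M ∈ p.S` and `K ∈ q.S` now contradict `oneislarge`.

The lift to `univ` is stationary because the traces `M ∩ A` of a club in `[B]` contain a club in
`[A]`: the countable `N ⊆ A` closed under a finitary Skolem function of the club.
-/

section

open Set

variable {γ : Type*}

theorem isClubIn_smallSubsets (A : Set γ) : IsClubIn A (smallSubsets A) :=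
  ⟨subset_rfl, fun N hN => ⟨N, hN, subset_rfl⟩, fun _ hD _ hcount _ =>
    ⟨sUnion_subset fun _ hM => (hD hM).1, hcount.sUnion fun _ hM => (hD hM).2⟩⟩

theorem IsStationaryIn.nonempty {A : Set γ} {S : Set (Set γ)} (hS : IsStationaryIn A S) :
    S.Nonempty :=
  (hS.2 _ (isClubIn_smallSubsets A)).mono inter_subset_left

namespace IsClubIn

variable {A : Set γ} {C D : Set (Set γ)}

theorem exists_skolem (hC : IsClubIn A C) :
    ∃ g : Set γ → Set γ, ∀ X ∈ smallSubsets A, g X ∈ C ∧ X ⊆ g X := by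
  have : ∀ X, ∃ Y, X ∈ smallSubsets A → Y ∈ C ∧ X ⊆ Y := fun X => by
    by_cases hX : X ∈ smallSubsets A
    · obtain ⟨Y, hY⟩ := hC.2.1 X hX
      exact ⟨Y, fun _ => hY⟩
    · exact ⟨X, fun h => absurd h hX⟩
  choose g hg using this
  exact ⟨g, hg⟩

theorem iUnion_mem (hC : IsClubIn A C) {f : ℕ → Set γ} (hf : Monotone f) (hfC : ∀ n, f n ∈ C) :
    ⋃ n, f n ∈ C := by
  rw [← sUnion_range]
  exact hC.2.2 _ (range_subset_iff.2 hfC) (range_nonempty f) (countable_range f) hf.isChain_range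

theorem inter (hC : IsClubIn A C) (hD : IsClubIn A D) : IsClubIn A (C ∩ D) := by
  refine ⟨fun M hM => hC.1 hM.1, fun N hN => ?_, fun E hE hne hcount hchain =>
    ⟨hC.2.2 E (fun M hM => (hE hM).1) hne hcount hchain,
      hD.2.2 E (fun M hM => (hE hM).2) hne hcount hchain⟩⟩
  obtain ⟨gC, hgC⟩ := hC.exists_skolem
  obtain ⟨gD, hgD⟩ := hD.exists_skolem
  -- alternate between `C` and `D`: `a 0 ⊆ b 0 ⊆ a 1 ⊆ b 1 ⊆ ⋯`
  let a : ℕ → Set γ := fun n => Nat.rec (gC N) (fun _ X => gC (gD X)) n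
  let b : ℕ → Set γ := fun n => gD (a n)
  have ha : ∀ n, a n ∈ C := by
    intro n
    induction n with
    | zero => exact (hgC N hN).1
    | succ n ih => exact (hgC _ (hD.1 (hgD _ (hC.1 ih)).1)).1
  have hb : ∀ n, b n ∈ D := fun n => (hgD _ (hC.1 (ha n))).1
  have hab : ∀ n, a n ⊆ b n := fun n => (hgD _ (hC.1 (ha n))).2
  have hba : ∀ n, b n ⊆ a (n + 1) := fun n => (hgC _ (hD.1 (hb n))).2
  have hunion : ⋃ n, a n = ⋃ n, b n :=
    (iUnion_mono hab).antisymm (iUnion_subset fun n => (hba n).trans (subset_iUnion a (n + 1)))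
  refine ⟨⋃ n, a n, ⟨?_, ?_⟩, (hgC N hN).2.trans (subset_iUnion a 0)⟩
  · exact hC.iUnion_mem (monotone_nat_of_le_succ fun n => (hab n).trans (hba n)) ha
  · exact hunion ▸ hD.iUnion_mem (monotone_nat_of_le_succ fun n => (hba n).trans (hab (n + 1))) hb

end IsClubIn

theorem IsStationaryIn.mono {A : Set γ} {S T : Set (Set γ)} (hS : IsStationaryIn A S)
    (hST : S ⊆ T) (hT : T ⊆ smallSubsets A) : IsStationaryIn A T :=
  ⟨hT, fun C hC => (hS.2 C hC).mono (inter_subset_inter_left C hST)⟩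

theorem IsStationaryIn.diff {A : Set γ} {S T : Set (Set γ)} (hS : IsStationaryIn A S)
    (hTS : T ⊆ S) (hT : ¬ IsStationaryIn A T) : IsStationaryIn A (S \ T) := by
  obtain ⟨C, hC, hTC⟩ : ∃ C, IsClubIn A C ∧ ¬ (T ∩ C).Nonempty := by
    simpa [IsStationaryIn, hTS.trans hS.1] using hT
  refine ⟨sdiff_subset.trans hS.1, fun E hE => ?_⟩
  obtain ⟨M, hMS, hMC, hME⟩ := hS.2 (C ∩ E) (hC.inter hE)
  exact ⟨M, ⟨hMS, fun hMT => hTC ⟨M, hMT, hMC⟩⟩, hME⟩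

theorem countable_setOf_list_forall_mem {N : Set γ} (hN : N.Countable) :
    {xs : List γ | ∀ x ∈ xs, x ∈ N}.Countable := by
  have := hN.to_subtype
  refine (countable_range (List.map ((↑) : N → γ))).mono fun xs hxs => ?_
  exact CanLift.prf (β := List N) xs hxs

theorem DirectedOn.exists_mem_forall_mem_of_list {D : Set (Set γ)} (hne : D.Nonempty)
    (hD : DirectedOn (· ⊆ ·) D) {xs : List γ} (hxs : ∀ x ∈ xs, x ∈ ⋃₀ D) :
    ∃ N ∈ D, ∀ x ∈ xs, x ∈ N :=
  hD.exists_mem_subset_of_finite_of_subset_sUnion hne (s := {x | x ∈ xs}) xs.finite_toSet hxs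

theorem isClubIn_closedUnder (A : Set γ) (g : List γ → Set γ)
    (hg : ∀ xs : List γ, (∀ x ∈ xs, x ∈ A) → (g xs).Countable) :
    IsClubIn A {N | N ∈ smallSubsets A ∧ ∀ xs : List γ, (∀ x ∈ xs, x ∈ N) → g xs ∩ A ⊆ N} := by
  refine ⟨fun N hN => hN.1, fun N₀ hN₀ => ?_, fun E hE hne hcount hchain => ?_⟩
  · let step : Set γ → Set γ := fun X => X ∪ ⋃ xs ∈ {xs : List γ | ∀ x ∈ xs, x ∈ X}, g xs ∩ A
    let seq : ℕ → Set γ := fun n => step^[n] N₀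
    have hsucc : ∀ n, seq (n + 1) = step (seq n) := fun n => Function.iterate_succ_apply' _ _ _
    have hseq : ∀ n, seq n ∈ smallSubsets A := by
      intro n
      induction n with
      | zero => exact hN₀
      | succ n ih =>
        rw [hsucc]
        refine ⟨union_subset ih.1 (iUnion₂_subset fun _ _ => inter_subset_right), ih.2.union ?_⟩
        exact (countable_setOf_list_forall_mem ih.2).biUnion fun xs hxs =>
          (hg xs fun x hx => ih.1 (hxs x hx)).mono inter_subset_left
    have hmono : Monotone seq := monotone_nat_of_le_succ fun n => hsucc n ▸ subset_union_left
    refine ⟨⋃ n, seq n, ⟨⟨iUnion_subset fun n => (hseq n).1,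
      countable_iUnion fun n => (hseq n).2⟩, fun xs hxs => ?_⟩, subset_iUnion seq 0⟩
    obtain ⟨_, ⟨n, rfl⟩, hn⟩ := DirectedOn.exists_mem_forall_mem_of_list (range_nonempty seq)
      hmono.isChain_range.directedOn (by rwa [sUnion_range])
    calc g xs ∩ A ⊆ seq (n + 1) := by
          rw [hsucc]
          exact subset_union_of_subset_right
            (subset_biUnion_of_mem (u := fun xs => g xs ∩ A) (s := {xs | ∀ x ∈ xs, x ∈ seq n}) hn) _
      _ ⊆ ⋃ n, seq n := subset_iUnion seq (n + 1)
  · refine ⟨⟨sUnion_subset fun N hN => (hE hN).1.1, hcount.sUnion fun N hN => (hE hN).1.2⟩,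
      fun xs hxs => ?_⟩
    obtain ⟨N, hNE, hN⟩ := DirectedOn.exists_mem_forall_mem_of_list hne hchain.directedOn hxs
    exact ((hE hNE).2 xs hN).trans (subset_sUnion_of_mem hNE)

namespace IsClubIn

variable {A B : Set γ} {C : Set (Set γ)}

theorem exists_list_skolem (hC : IsClubIn B C) :
    ∃ G : List γ → Set γ, (∀ xs : List γ, (∀ x ∈ xs, x ∈ B) → G xs ∈ C) ∧
      ∀ y ys, (∀ x ∈ y :: ys, x ∈ B) → insert y (G ys) ⊆ G (y :: ys) := by
  obtain ⟨g, hg⟩ := hC.exists_skolem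
  let G : List γ → Set γ := fun xs => xs.foldr (fun x M => g (insert x M)) (g ∅)
  have hGC : ∀ xs : List γ, (∀ x ∈ xs, x ∈ B) → G xs ∈ C := by
    intro xs hxs
    induction xs with
    | nil => exact (hg ∅ ⟨empty_subset B, countable_empty⟩).1
    | cons y ys ih =>
      have hys := hC.1 (ih fun x hx => hxs x (List.mem_cons_of_mem y hx))
      exact (hg _ ⟨insert_subset (hxs y List.mem_cons_self) hys.1, hys.2.insert y⟩).1
  refine ⟨G, hGC, fun y ys hyys => ?_⟩
  have hys := hC.1 (hGC ys fun x hx => hyys x (List.mem_cons_of_mem y hx))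
  exact (hg _ ⟨insert_subset (hyys y List.mem_cons_self) hys.1, hys.2.insert y⟩).2

theorem exists_isClubIn_forall_exists_inter_eq (hC : IsClubIn B C) (hAB : A ⊆ B) :
    ∃ D, IsClubIn A D ∧ ∀ N ∈ D, ∃ M ∈ C, M ∩ A = N := by
  obtain ⟨G, hGC, hGcons⟩ := hC.exists_list_skolem
  have hGC' : ∀ xs : List γ, (∀ x ∈ xs, x ∈ A) → G xs ∈ C := fun xs hxs =>
    hGC xs fun x hx => hAB (hxs x hx)
  refine ⟨_, isClubIn_closedUnder A G fun xs hxs => (hC.1 (hGC' xs hxs)).2,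
    fun N ⟨hN, hNclosed⟩ => ?_⟩
  rcases N.eq_empty_or_nonempty with rfl | hNne
  · exact ⟨G [], hGC' [] (by simp), subset_empty_iff.1 (hNclosed [] (by simp))⟩
  obtain ⟨f, rfl⟩ := hN.2.exists_eq_range hNne
  -- `L n = [f (n-1), …, f 1, f 0]`
  let L : ℕ → List γ := fun n => Nat.rec [] (fun n xs => f n :: xs) n
  have hL : ∀ n, ∀ x ∈ L n, x ∈ range f := by
    intro n
    induction n with
    | zero => simp [L]
    | succ n ih => exact List.forall_mem_cons.2 ⟨mem_range_self n, ih⟩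
  have hLA : ∀ n, ∀ x ∈ L n, x ∈ A := fun n x hx => hN.1 (hL n x hx)
  have hstep : ∀ n, insert (f n) (G (L n)) ⊆ G (L (n + 1)) := fun n =>
    hGcons (f n) (L n) fun x hx => hAB (hLA (n + 1) x hx)
  have hmono : Monotone fun n => G (L n) :=
    monotone_nat_of_le_succ fun n => (subset_insert _ _).trans (hstep n)
  refine ⟨⋃ n, G (L n), hC.iUnion_mem hmono fun n => hGC' _ (hLA n), ?_⟩
  refine (iUnion_inter A _ ▸ iUnion_subset fun n => hNclosed _ (hL n)).antisymm ?_
  rintro _ ⟨n, rfl⟩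
  exact ⟨mem_iUnion.2 ⟨n + 1, hstep n (mem_insert _ _)⟩, hN.1 (mem_range_self n)⟩

end IsClubIn

theorem IsStationaryIn.lift {A B : Set γ} {S : Set (Set γ)} (hS : IsStationaryIn A S)
    (hAB : A ⊆ B) : IsStationaryIn B {M | M ⊆ B ∧ M.Countable ∧ M ∩ A ∈ S} := by
  refine ⟨fun M hM => ⟨hM.1, hM.2.1⟩, fun C hC => ?_⟩
  obtain ⟨D, hD, hDC⟩ := hC.exists_isClubIn_forall_exists_inter_eq hAB
  obtain ⟨N, hNS, hND⟩ := hS.2 D hD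
  obtain ⟨M, hMC, rfl⟩ := hDC N hND
  exact ⟨M, ⟨(hC.1 hMC).1, (hC.1 hMC).2, hNS⟩, hMC⟩

namespace Cond

variable {p q r : Cond γ}

theorem IsCond.le_refl (hp : p.IsCond) : p.le p := by
  refine ⟨subset_rfl, fun M hM => ?_⟩
  obtain ⟨hMA, hMc⟩ := hp.2.1 hM
  exact ⟨hMA, hMc, by rwa [inter_eq_self_of_subset_left hMA]⟩

theorem le.trans (hpq : p.le q) (hqr : q.le r) : p.le r := by
  refine ⟨hqr.1.trans hpq.1, fun M hM => ?_⟩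
  obtain ⟨hMA, hMc, hMq⟩ := hpq.2 hM
  refine ⟨hMA, hMc, ?_⟩
  simpa only [inter_assoc, inter_eq_self_of_subset_right hqr.1] using (hqr.2 hMq).2.2

theorem le.S_subset (hpq : p.le q) (hA : p.A ⊆ q.A) : p.S ⊆ q.S := fun M hM => by
  obtain ⟨hMA, -, hMq⟩ := hpq.2 hM
  rwa [inter_eq_self_of_subset_left (hMA.trans hA)] at hMq

/-- The condition `⟨B, S↑B⟩`. -/
def lift (p : Cond γ) (B : Set γ) : Cond γ :=
  ⟨B, {M | M ⊆ B ∧ M.Countable ∧ M ∩ p.A ∈ p.S}⟩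

theorem IsCond.lift {B : Set γ} (hp : p.IsCond) (hB : p.A ⊆ B) : (p.lift B).IsCond :=
  ⟨hp.1.mono hB, hp.2.lift hB⟩

theorem lift_le {B : Set γ} (hB : p.A ⊆ B) : (p.lift B).le p :=
  ⟨hB, fun _ hM => hM⟩

theorem IsCond.diff (hp : p.IsCond) {T : Set (Set γ)} (hT : T ⊆ p.S)
    (hTn : ¬ IsStationaryIn p.A T) : (⟨p.A, p.S \ T⟩ : Cond γ).IsCond :=
  ⟨hp.1, hp.2.diff hT hTn⟩

theorem diff_le (hp : p.IsCond) (T : Set (Set γ)) : (⟨p.A, p.S \ T⟩ : Cond γ).le p :=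
  ⟨subset_rfl, fun _ hM => hp.le_refl.2 hM.1⟩

end Cond

section Coloring

variable {l : ℕ} {F : Set γ → γ} {c : γ → γ → Fin l} {p q p' q' : Cond γ}

theorem ILarge.of_le {M : Set γ} {i : Fin l} (h : ILarge F c M q' i) (hq' : q'.le q)
    (hA : q'.A ⊆ q.A) (hq : q.IsCond) : ILarge F c M q i := by
  unfold ILarge at h ⊢
  rw [hA.antisymm hq'.1] at h
  exact h.mono (fun K hK => ⟨hq'.S_subset hA hK.1, hK.2⟩) fun K hK => hq.2.1 hK.1

/-- The negation of the conclusion of `oneislarge` for the colors `(i, j)`. -/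
def Separated (F : Set γ → γ) (c : γ → γ → Fin l) (p q : Cond γ) (i j : Fin l) : Prop :=
  (∀ M ∈ p.S, ¬ ILarge F c M q i) ∨ (∀ K ∈ q.S, ¬ ILarge F c K p j)

theorem Separated.of_le {i j : Fin l} (h : Separated F c p q i j) (hp : p.IsCond) (hq : q.IsCond)
    (hp' : p'.le p) (hpA : p'.A ⊆ p.A) (hq' : q'.le q) (hqA : q'.A ⊆ q.A) :
    Separated F c p' q' i j :=
  h.imp (fun h M hM hMi => h M (hp'.S_subset hpA hM) (hMi.of_le hq' hqA hq))
    fun h K hK hKj => h K (hq'.S_subset hqA hK) (hKj.of_le hp' hpA hp)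

theorem exists_separated_of_not_saturated {i j : Fin l} (h : ¬ Saturated F c p q i j) :
    ∃ p' q' : Cond γ, p'.IsCond ∧ q'.IsCond ∧ p'.le p ∧ q'.le q ∧ Separated F c p' q' i j := by
  simp only [Saturated, not_forall, not_and_or] at h
  obtain ⟨p', hp', hp'p, q', hq', hq'q, hMs | hKs⟩ := h
  · refine ⟨_, q', hp'.diff (sep_subset _ _) hMs, hq', (Cond.diff_le hp' _).trans hp'p, hq'q,
      Or.inl fun M hM hMi => hM.2 ⟨hM.1, hMi⟩⟩
  · refine ⟨p', _, hp', hq'.diff (sep_subset _ _) hKs, hp'p, (Cond.diff_le hq' _).trans hq'q,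
      Or.inr fun K hK hKj => hK.2 ⟨hK.1, hKj⟩⟩

end Coloring

theorem Cond.exists_le_forall_of_dense {ι : Type*} (s : Finset ι) (P : ι → Cond γ → Prop)
    (hP : ∀ i r r', Cond.le r' r → P i r → P i r') {r₀ : Cond γ} (hr₀ : r₀.IsCond)
    (hdense : ∀ i ∈ s, ∀ r : Cond γ, r.IsCond → r.le r₀ → ∃ r', r'.IsCond ∧ r'.le r ∧ P i r') :
    ∃ r : Cond γ, r.IsCond ∧ r.le r₀ ∧ ∀ i ∈ s, P i r := by
  classical
  induction s using Finset.induction_on with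
  | empty => exact ⟨r₀, hr₀, hr₀.le_refl, by simp⟩
  | insert i s _ ih =>
    obtain ⟨r, hr, hrr₀, hPr⟩ := ih fun j hj => hdense j (Finset.mem_insert_of_mem hj)
    obtain ⟨r', hr', hr'r, hPr'⟩ := hdense i (Finset.mem_insert_self i s) r hr hrr₀
    refine ⟨r', hr', hr'r.trans hrr₀, fun j hj => ?_⟩
    rcases Finset.mem_insert.1 hj with rfl | hj
    · exact hPr'
    · exact hP j r r' hr'r (hPr j hj)

theorem exists_forall_separated {l : ℕ} {F : Set γ → γ} {c : γ → γ → Fin l} {r : Cond γ}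
    (hr : r.IsCond) (hrA : r.A = univ)
    (hr_unsat : ∀ ij : Fin l × Fin l, ∀ p q : Cond γ, p.IsCond → q.IsCond → p.le r → q.le r →
      ¬ Saturated F c p q ij.1 ij.2)
    (s : Finset (Fin l × Fin l)) :
    ∃ p q : Cond γ, p.IsCond ∧ q.IsCond ∧ p.le r ∧ q.le r ∧
      ∀ ij ∈ s, Separated F c p q ij.1 ij.2 := by
  classical
  induction s using Finset.induction_on with
  | empty => exact ⟨r, r, hr, hr, hr.le_refl, hr.le_refl, by simp⟩
  | insert ij s _ ih =>
    obtain ⟨p, q, hp, hq, hpr, hqr, hsep⟩ := ih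
    obtain ⟨p', q', hp', hq', hp'p, hq'q, hsep'⟩ :=
      exists_separated_of_not_saturated (hr_unsat ij p q hp hq hpr hqr)
    -- every condition below `r` has ambient set `univ`, so separation is inherited
    have hA : ∀ {x y : Cond γ}, y.le r → x.A ⊆ y.A := fun hyr a _ => hyr.1 (hrA ▸ mem_univ a)
    refine ⟨p', q', hp', hq', hp'p.trans hpr, hq'q.trans hqr, fun ij' hij' => ?_⟩
    rcases Finset.mem_insert.1 hij' with rfl | hij'
    · exact hsep'
    · exact (hsep ij' hij').of_le hp hq hp'p (hA hpr) hq'q (hA hqr)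

end

theorem stmt_18_general {γ : Type*} {l : ℕ}
    (F : Set γ → γ) (c : γ → γ → Fin l)
    (p₀ : Cond γ) (hp₀ : p₀.IsCond)
    (honelarge : ∀ p q : Cond γ, p.IsCond → q.IsCond → p.le p₀ → q.le p₀ →
      ∀ M ∈ p.S, ∀ K ∈ q.S,
        ∃ i j : Fin l, ILarge F c M q i ∧ ILarge F c K p j) :
    ∃ i j : Fin l, ∃ p₁ : Cond γ, p₁.IsCond ∧ p₁.le p₀ ∧
      ∀ p₂ : Cond γ, p₂.IsCond → p₂.le p₁ →
        ∃ p q : Cond γ, p.IsCond ∧ q.IsCond ∧ p.le p₂ ∧ q.le p₂ ∧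
          Saturated F c p q i j := by
  by_contra hcon
  push Not at hcon
  have hU : (p₀.lift Set.univ).IsCond := hp₀.lift (Set.subset_univ _)
  have hUp₀ : (p₀.lift Set.univ).le p₀ := Cond.lift_le (Set.subset_univ _)
  obtain ⟨r, hr, hrU, hr_unsat⟩ := Cond.exists_le_forall_of_dense Finset.univ
    (fun (ij : Fin l × Fin l) r => ∀ p q : Cond γ, p.IsCond → q.IsCond → p.le r → q.le r →
      ¬ Saturated F c p q ij.1 ij.2)
    (fun _ _ _ hr'r h p q hp hq hpr' hqr' => h p q hp hq (hpr'.trans hr'r) (hqr'.trans hr'r))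
    hU fun ij _ r hr hrU => hcon ij.1 ij.2 r hr (hrU.trans hUp₀)
  obtain ⟨p, q, hp, hq, hpr, hqr, hsep⟩ := exists_forall_separated hr
    (Set.univ_subset_iff.1 hrU.1) (fun ij => hr_unsat ij (Finset.mem_univ ij)) Finset.univ
  obtain ⟨M, hM⟩ := hp.2.nonempty
  obtain ⟨K, hK⟩ := hq.2.nonempty
  obtain ⟨i, j, hMi, hKj⟩ := honelarge p q hp hq (hpr.trans (hrU.trans hUp₀))
    (hqr.trans (hrU.trans hUp₀)) M hM K hK
  exact (hsep (i, j) (Finset.mem_univ _)).elim (fun h => h M hM hMi) fun h => h K hK hKj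

theorem stmt_18 {γ : Type*} {l : ℕ} (hl : 0 < l)
    (F : Set γ → γ) (c : γ → γ → Fin l)
    (p₀ : Cond γ) (hp₀ : p₀.IsCond)
    (honelarge : ∀ p q : Cond γ, p.IsCond → q.IsCond → p.le p₀ → q.le p₀ →
      ∀ M ∈ p.S, ∀ K ∈ q.S,
        ∃ i j : Fin l, ILarge F c M q i ∧ ILarge F c K p j) :
    ∃ i j : Fin l, ∃ p₁ : Cond γ, p₁.IsCond ∧ p₁.le p₀ ∧
      ∀ p₂ : Cond γ, p₂.IsCond → p₂.le p₁ →
        ∃ p q : Cond γ, p.IsCond ∧ q.IsCond ∧ p.le p₂ ∧ q.le p₂ ∧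
          Saturated F c p q i j :=
  stmt_18_general F c p₀ hp₀ honelarge
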